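/- arXiv:2502.10472 — 6 statements merged into one kernel-verified Lean document; each statement's English description precedes it below -/
import Mathlib

section
/- Let k ≥ 2 and let Γ₁,…,Γ_k be nonzero real numbers such that ∑_{1≤i<j≤k} Γ_i·Γ_j = 0. Then for every index m ∈ {1,…,k}, ∑_{i≠m} Γ_i ≠ 0. -/
open Finset

lemma sq_sum_eq_sum_sq_add_two_mul {ι : Type*} [Fintype ι] [LinearOrder ι] (f : ι → ℝ) :
    (∑ i, f i) ^ 2 = ∑ i, (f i) ^ 2
      + 2 * ∑ i : ι, ∑ j ∈ Finset.univ.filter (fun j => i < j), f i * f j := by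
  have h : (∑ i, f i) ^ 2 = ∑ i : ι, ∑ j : ι, f i * f j := by
    rw [sq, Finset.sum_mul_sum]
  rw [h]
  have hsplit : ∀ i : ι, ∑ j : ι, f i * f j =
      f i ^ 2 + ∑ j ∈ Finset.univ.filter (fun j => i < j), f i * f j
        + ∑ j ∈ Finset.univ.filter (fun j => j < i), f i * f j := by
    intro i
    have : (Finset.univ : Finset ι) =
        insert i ((Finset.univ.filter (fun j => i < j)) ∪ (Finset.univ.filter (fun j => j < i))) := by
      ext x
      simp only [Finset.mem_insert, Finset.mem_union, Finset.mem_filter, Finset.mem_univ,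
        true_and, true_iff]
      rcases lt_trichotomy i x with h | h | h
      · exact Or.inr (Or.inl h)
      · exact Or.inl h.symm
      · exact Or.inr (Or.inr h)
    conv_lhs => rw [this]
    rw [Finset.sum_insert, Finset.sum_union]
    · ring
    · rw [Finset.disjoint_filter]
      intro x _ hx hx'
      exact absurd (hx.trans hx') (lt_irrefl i)
    · simp
  rw [Finset.sum_congr rfl (fun i _ => hsplit i)]
  rw [Finset.sum_add_distrib, Finset.sum_add_distrib]
  have hswap : ∑ i : ι, ∑ j ∈ Finset.univ.filter (fun j => j < i), f i * f j
      = ∑ i : ι, ∑ j ∈ Finset.univ.filter (fun j => i < j), f i * f j := by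
    rw [Finset.sum_sigma', Finset.sum_sigma']
    apply Finset.sum_nbij' (fun p => ⟨p.2, p.1⟩) (fun p => ⟨p.2, p.1⟩) <;>
      simp [mul_comm]
  rw [hswap]; ring

/-- If Γ₁,…,Γ_k are nonzero reals with ∑_{i<j} Γ_i Γ_j = 0, then for every index m,
the sum of the Γ_i with i ≠ m is nonzero. -/
theorem partial_vorticity_ne_zero_of_L_eq_zero
    (k : ℕ) (hk : 2 ≤ k) (Γ : Fin k → ℝ) (hΓ : ∀ i, Γ i ≠ 0)
    (hL : ∑ i : Fin k, ∑ j ∈ Finset.univ.filter (fun j => i < j), Γ i * Γ j = 0)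
    (m : Fin k) :
    ∑ i ∈ Finset.univ.erase m, Γ i ≠ 0 := by
  intro hS
  have hsq := sq_sum_eq_sum_sq_add_two_mul Γ
  rw [hL, mul_zero, add_zero] at hsq
  have h1 : ∑ i, Γ i = Γ m := by
    rw [← Finset.add_sum_erase _ _ (Finset.mem_univ m), hS, add_zero]
  have h2 : ∑ i, (Γ i) ^ 2 = Γ m ^ 2 + ∑ i ∈ Finset.univ.erase m, (Γ i) ^ 2 :=
    (Finset.add_sum_erase _ _ (Finset.mem_univ m)).symm
  rw [h1, h2] at hsq
  have h3 : ∑ i ∈ Finset.univ.erase m, (Γ i) ^ 2 = 0 := by linarith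
  have hne : (Finset.univ.erase m).Nonempty := by
    rw [← Finset.card_pos, Finset.card_erase_of_mem (Finset.mem_univ m), Finset.card_univ,
      Fintype.card_fin]
    omega
  have hpos : 0 < ∑ i ∈ Finset.univ.erase m, (Γ i) ^ 2 :=
    Finset.sum_pos (fun i _ => by have := hΓ i; positivity) hne
  linarith
end

section
/- Let k ≥ 2 and let Γ₁,…,Γ_{k+1} be nonzero real numbers. Then it is impossible that both ∑_{1≤i<j≤k} Γ_i·Γ_j = 0 and ∑_{1≤i<j≤k+1} Γ_i·Γ_j = 0. -/
open Finset

/-- Square of a sum over a finset in a linear order. -/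
lemma sq_sum_eq_aux {ι : Type*} [LinearOrder ι] [DecidableEq ι] (s : Finset ι) (f : ι → ℝ) :
    (∑ i ∈ s, f i) ^ 2 =
      (∑ i ∈ s, f i ^ 2) + 2 * ∑ i ∈ s, ∑ j ∈ s.filter (fun j => i < j), f i * f j := by
  have h1 : (∑ i ∈ s, f i) ^ 2 = ∑ p ∈ s ×ˢ s, f p.1 * f p.2 := by
    rw [sq, Finset.sum_mul_sum, Finset.sum_product]
  have hA : ∑ p ∈ (s ×ˢ s).filter (fun p => p.1 < p.2), f p.1 * f p.2 =
      ∑ i ∈ s, ∑ j ∈ s.filter (fun j => i < j), f i * f j := by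
    rw [Finset.sum_filter, Finset.sum_product]
    simp [Finset.sum_filter]
  have hB : ∑ p ∈ (s ×ˢ s).filter (fun p => p.2 < p.1), f p.1 * f p.2 =
      ∑ p ∈ (s ×ˢ s).filter (fun p => p.1 < p.2), f p.1 * f p.2 := by
    apply Finset.sum_nbij' (fun p => p.swap) (fun p => p.swap) <;>
      simp [Finset.mem_filter, and_comm, mul_comm]
  have hD : ∑ p ∈ (s ×ˢ s).filter (fun p => ¬ p.1 < p.2 ∧ ¬ p.2 < p.1), f p.1 * f p.2 =
      ∑ i ∈ s, f i ^ 2 := by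
    apply Finset.sum_nbij' (fun p => p.1) (fun i => (i, i))
    · intro p hp
      simp only [Finset.mem_filter, Finset.mem_product] at hp
      exact hp.1.1
    · intro i hi
      simp only [Finset.mem_filter, Finset.mem_product]
      exact ⟨⟨hi, hi⟩, lt_irrefl _, lt_irrefl _⟩
    · intro p hp
      simp only [Finset.mem_filter, Finset.mem_product] at hp
      have : p.1 = p.2 := le_antisymm (not_lt.mp hp.2.2) (not_lt.mp hp.2.1)
      exact Prod.ext rfl this
    · intro i hi; rfl
    · intro p hp
      simp only [Finset.mem_filter, Finset.mem_product] at hp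
      have : p.1 = p.2 := le_antisymm (not_lt.mp hp.2.2) (not_lt.mp hp.2.1)
      simp [← this, sq]
  rw [h1, ← Finset.sum_filter_add_sum_filter_not (s ×ˢ s) (fun p => p.1 < p.2)]
  rw [← Finset.sum_filter_add_sum_filter_not ((s ×ˢ s).filter (fun p => ¬ p.1 < p.2))
        (fun p => p.2 < p.1), Finset.filter_filter, Finset.filter_filter]
  have e1 : (s ×ˢ s).filter (fun p => ¬ p.1 < p.2 ∧ p.2 < p.1) =
      (s ×ˢ s).filter (fun p => p.2 < p.1) := by
    apply Finset.filter_congr; intro p _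
    constructor
    · exact fun h => h.2
    · exact fun h => ⟨fun h' => absurd h (asymm h'), h⟩
  rw [e1, hA, hB, hA, hD]; ring

/-- For nonzero reals Γ₁,…,Γ_{k+1}, it is impossible that both L_{1…k} = 0
and L_{1…k+1} = 0. -/
theorem not_both_L_eq_zero
    (k : ℕ) (hk : 2 ≤ k) (Γ : Fin (k + 1) → ℝ) (hΓ : ∀ i, Γ i ≠ 0) :
    ¬ ((∑ i : Fin (k + 1),
          ∑ j ∈ Finset.univ.filter (fun j => i < j ∧ (j : ℕ) < k), Γ i * Γ j = 0) ∧
       (∑ i : Fin (k + 1),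
          ∑ j ∈ Finset.univ.filter (fun j => i < j), Γ i * Γ j = 0)) := by
  rintro ⟨h1, h2⟩
  set T : Finset (Fin (k + 1)) := Finset.univ.filter (fun i => (i : ℕ) < k) with hT
  -- rewrite L_k as a sum over T × T with i < j
  have hL : ∑ i ∈ T, ∑ j ∈ T.filter (fun j => i < j), Γ i * Γ j =
      ∑ i : Fin (k + 1), ∑ j ∈ Finset.univ.filter (fun j => i < j ∧ (j : ℕ) < k), Γ i * Γ j := by
    rw [← Finset.sum_subset (Finset.subset_univ T)]
    · apply Finset.sum_congr rfl
      intro i _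
      apply Finset.sum_congr _ (fun _ _ => rfl)
      rw [hT, Finset.filter_filter]
      apply Finset.filter_congr; intro j _; simp [and_comm]
    · intro i _ hi
      rw [hT, Finset.mem_filter] at hi
      push_neg at hi
      have hik : k ≤ (i : ℕ) := hi (Finset.mem_univ i)
      apply Finset.sum_eq_zero
      intro j hj
      rw [Finset.mem_filter] at hj
      have hij := Fin.lt_def.mp hj.2.1
      have hjk := hj.2.2
      omega
  set S : ℝ := ∑ i ∈ T, Γ i with hS
  have hsq : S ^ 2 = ∑ i ∈ T, Γ i ^ 2 := by
    rw [hS, sq_sum_eq_aux, hL, h1, mul_zero, add_zero]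
  have h0T : (0 : Fin (k + 1)) ∈ T := by
    rw [hT, Finset.mem_filter]
    refine ⟨Finset.mem_univ _, ?_⟩
    simp only [Fin.val_zero]
    omega
  have hpos : 0 < ∑ i ∈ T, Γ i ^ 2 := by
    apply Finset.sum_pos' (fun i _ => sq_nonneg _)
    exact ⟨0, h0T, by have := hΓ 0; positivity⟩
  have hSne : S ≠ 0 := by
    intro h
    rw [h] at hsq
    simp only [ne_eq, zero_pow, OfNat.ofNat_ne_zero, not_false_eq_true] at hsq
    linarith
  -- split L_{k+1}
  have hlastval : ((Fin.last k : Fin (k + 1)) : ℕ) = k := rfl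
  have hnotlt : ∀ j : Fin (k + 1), ¬ (j : ℕ) < k ↔ j = Fin.last k := by
    intro j
    constructor
    · intro h; apply Fin.ext; have := j.isLt; simp only [hlastval]; omega
    · intro h; subst h; simp [hlastval]
  have hsplit : ∀ i : Fin (k + 1),
      ∑ j ∈ Finset.univ.filter (fun j => i < j), Γ i * Γ j =
        (∑ j ∈ Finset.univ.filter (fun j => i < j ∧ (j : ℕ) < k), Γ i * Γ j) +
        (if i < Fin.last k then Γ i * Γ (Fin.last k) else 0) := by
    intro i
    have hunion : (Finset.univ.filter (fun j : Fin (k+1) => i < j)) =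
        (Finset.univ.filter (fun j => i < j ∧ (j : ℕ) < k)) ∪
        (Finset.univ.filter (fun j => i < j ∧ ¬ (j : ℕ) < k)) := by
      rw [← Finset.filter_or]
      apply Finset.filter_congr; intro j _; tauto
    have hdisj : Disjoint (Finset.univ.filter (fun j : Fin (k+1) => i < j ∧ (j : ℕ) < k))
        (Finset.univ.filter (fun j => i < j ∧ ¬ (j : ℕ) < k)) := by
      rw [Finset.disjoint_left]
      intro j hj hj'
      rw [Finset.mem_filter] at hj hj'
      exact hj'.2.2 hj.2.2
    rw [hunion, Finset.sum_union hdisj]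
    congr 1
    have hlf : (Finset.univ.filter (fun j : Fin (k+1) => i < j ∧ ¬ (j : ℕ) < k)) =
        if i < Fin.last k then {Fin.last k} else ∅ := by
      ext j
      simp only [Finset.mem_filter, Finset.mem_univ, true_and, hnotlt j]
      by_cases hi : i < Fin.last k
      · simp only [hi, if_true, Finset.mem_singleton]
        constructor
        · exact fun h => h.2
        · rintro rfl; exact ⟨hi, rfl⟩
      · simp only [hi, if_false, Finset.notMem_empty, iff_false]
        rintro ⟨h, rfl⟩; exact hi h
    rw [hlf]
    split <;> simp
  have h2' : (∑ i : Fin (k + 1),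
      ∑ j ∈ Finset.univ.filter (fun j => i < j ∧ (j : ℕ) < k), Γ i * Γ j) +
      S * Γ (Fin.last k) = 0 := by
    rw [← h2]
    rw [Finset.sum_congr rfl (fun i _ => hsplit i), Finset.sum_add_distrib]
    congr 1
    rw [← Finset.sum_filter, hS, Finset.sum_mul]
    apply Finset.sum_congr
    · rw [hT]
      apply Finset.filter_congr; intro i _
      simp only [Fin.lt_def, hlastval]
    · intro i _; rfl
  rw [h1, zero_add] at h2'
  rcases mul_eq_zero.mp h2' with h | h
  · exact hSne h
  · exact hΓ _ h
end

section
/- Let N ≥ 3, let Γ₁,…,Γ_N be nonzero real numbers with Γ₁ + Γ₂ ≠ 0, and let Λ ∈ ℂ with |Λ| = 1 satisfy conj(Λ)/Λ = 1 + (∑_{j=3}^N Γ_j)·(1/Γ₁ + 1/Γ₂). Then Λ ∈ {1, −1, i, −i}. Moreover: (a) if Λ = 1 or Λ = −1, then ∑_{j=3}^N Γ_j = 0; (b) if Λ = i or Λ = −i and additionally ∑_{1≤j<k≤N} Γ_j·Γ_k = 0, then Γ₁·Γ₂ = ∑_{3≤j<k≤N} Γ_j·Γ_k. -/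
/-!
Since `|Λ| = 1`, `conj Λ / Λ = Λ⁻²`, so the hypothesis says that `Λ⁻²` is the real number
`r = 1 + S (1/Γ₁ + 1/Γ₂)` with `S = ∑_{j≥3} Γ_j`. Having modulus one, `r = ±1`, whence `Λ² = ±1`.
Clearing denominators, `S (Γ₁ + Γ₂) = (r - 1) Γ₁ Γ₂`. For `Λ = ±1` this gives `S = 0` because
`Γ₁ + Γ₂ ≠ 0`; for `Λ = ±i` it gives `S (Γ₁ + Γ₂) = -2 Γ₁ Γ₂`, and splitting off the first two
indices, `L = Γ₁ Γ₂ + (Γ₁ + Γ₂) S + L_{3…N}`, turns `L = 0` into `Γ₁ Γ₂ = L_{3…N}`.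
-/

open Finset

section PairSum

variable {ι R : Type*} [LinearOrder ι] [CommSemiring R]

/-- The paper's `L_J` for `J = s`. -/
def pairSum (s : Finset ι) (f : ι → R) : R := ∑ j ∈ s, ∑ k ∈ s with j < k, f j * f k

theorem pairSum_insert_of_forall_lt {a : ι} {s : Finset ι} (hs : ∀ k ∈ s, a < k) (f : ι → R) :
    pairSum (insert a s) f = f a * ∑ k ∈ s, f k + pairSum s f := by
  have ha : a ∉ s := fun h => lt_irrefl a (hs a h)
  have hfilter_a : {k ∈ insert a s | a < k} = s := by
    rw [filter_insert, if_neg (lt_irrefl a), filter_true_of_mem hs]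
  have hfilter_s : ∀ j ∈ s, {k ∈ insert a s | j < k} = {k ∈ s | j < k} := fun j hj => by
    rw [filter_insert, if_neg (hs j hj).asymm]
  rw [pairSum, pairSum, sum_insert ha, hfilter_a, mul_sum]
  exact congrArg _ (sum_congr rfl fun j hj => by rw [hfilter_s j hj])

theorem sum_sum_filter_lt_and_eq_pairSum [Fintype ι] (p : ι → Prop) [DecidablePred p]
    (hp : ∀ j k, j < k → p j → p k) (f : ι → R) :
    ∑ j, ∑ k with j < k ∧ p j, f j * f k = pairSum {j | p j} f := by
  rw [pairSum, sum_filter]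
  refine sum_congr rfl fun j _ => ?_
  split_ifs with hj
  · refine sum_congr ?_ fun _ _ => rfl
    ext k
    simp only [mem_filter, mem_univ, true_and, hj, and_true]
    exact ⟨fun h => ⟨hp j k h hj, h⟩, And.right⟩
  · simp [hj]

theorem pairSum_univ_fin (N : ℕ) (hN : 2 ≤ N) (f : Fin N → R) :
    pairSum univ f = f ⟨0, by omega⟩ * f ⟨1, by omega⟩ +
      (f ⟨0, by omega⟩ + f ⟨1, by omega⟩) * ∑ j ∈ univ.filter (fun j : Fin N => 2 ≤ (j : ℕ)), f j +
      pairSum (univ.filter fun j : Fin N => 2 ≤ (j : ℕ)) f := by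
  set T := univ.filter fun j : Fin N => 2 ≤ (j : ℕ)
  have huniv : (univ : Finset (Fin N)) = insert ⟨0, by omega⟩ (insert ⟨1, by omega⟩ T) := by
    ext j
    simp only [mem_univ, mem_insert, Fin.ext_iff, mem_filter, true_and, true_iff, T]
    omega
  have h1 : ∀ k ∈ T, (⟨1, by omega⟩ : Fin N) < k := fun k hk => by
    simp only [T, mem_filter] at hk; exact Fin.mk_lt_of_lt_val (by omega)
  have h0 : ∀ k ∈ insert ⟨1, by omega⟩ T, (⟨0, by omega⟩ : Fin N) < k := fun k hk => by
    rcases mem_insert.1 hk with rfl | hk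
    · exact Fin.mk_lt_mk.2 one_pos
    · exact lt_trans (Fin.mk_lt_mk.2 one_pos) (h1 k hk)
  have h1T : (⟨1, by omega⟩ : Fin N) ∉ T := fun h => lt_irrefl _ (h1 _ h)
  rw [huniv, pairSum_insert_of_forall_lt h0, pairSum_insert_of_forall_lt h1, sum_insert h1T]
  ring

end PairSum

namespace Complex

theorem sq_eq_ofReal_of_conj_div_self {Λ : ℂ} (hΛ : ‖Λ‖ = 1) {r : ℝ}
    (h : starRingEnd ℂ Λ / Λ = r) : Λ ^ 2 = r ∧ (r = 1 ∨ r = -1) := by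
  have hinv : (Λ ^ 2)⁻¹ = r := by
    rw [← h, ← inv_eq_conj hΛ, sq, mul_inv, div_eq_mul_inv]
  have hr : r = 1 ∨ r = -1 := by
    refine (abs_eq zero_le_one).1 ?_
    simpa [hΛ] using (congrArg norm hinv).symm
  refine ⟨?_, hr⟩
  rw [← inv_inv (Λ ^ 2), hinv]
  rcases hr with rfl | rfl <;> norm_num

theorem eq_one_or_neg_one_or_I_or_neg_I_of_sq {Λ : ℂ} (h : Λ ^ 2 = 1 ∨ Λ ^ 2 = -1) :
    Λ = 1 ∨ Λ = -1 ∨ Λ = I ∨ Λ = -I := by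
  rcases h with h | h
  · rcases sq_eq_one_iff.1 h with h | h <;> simp [h]
  · rw [← I_sq, sq_eq_sq_iff_eq_or_eq_neg] at h
    rcases h with h | h <;> simp [h]

end Complex

-- Vertices 1 and 2 of the paper are the indices `⟨0, _⟩` and `⟨1, _⟩`.
/-- Proposition 4.5 (algebraic content): isolated z-stroke with two z-circled ends.
Vertices 1 and 2 are the indices ⟨0⟩ and ⟨1⟩. -/
theorem isolated_z_stroke
    (N : ℕ) (hN : 3 ≤ N) (Γ : Fin N → ℝ) (hΓ : ∀ i, Γ i ≠ 0)
    (h12 : Γ ⟨0, by omega⟩ + Γ ⟨1, by omega⟩ ≠ 0)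
    (Λ : ℂ) (hΛ : ‖Λ‖ = 1)
    (h : (starRingEnd ℂ) Λ / Λ =
      1 + (((∑ j ∈ Finset.univ.filter (fun j : Fin N => 2 ≤ (j : ℕ)), Γ j) *
        (1 / Γ ⟨0, by omega⟩ + 1 / Γ ⟨1, by omega⟩) : ℝ) : ℂ)) :
    (Λ = 1 ∨ Λ = -1 ∨ Λ = Complex.I ∨ Λ = -Complex.I) ∧
    ((Λ = 1 ∨ Λ = -1) →
      ∑ j ∈ Finset.univ.filter (fun j : Fin N => 2 ≤ (j : ℕ)), Γ j = 0) ∧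
    ((Λ = Complex.I ∨ Λ = -Complex.I) →
      (∑ j : Fin N, ∑ k ∈ Finset.univ.filter (fun k => j < k), Γ j * Γ k) = 0 →
      Γ ⟨0, by omega⟩ * Γ ⟨1, by omega⟩ =
        ∑ j : Fin N, ∑ k ∈ Finset.univ.filter (fun k => j < k ∧ 2 ≤ (j : ℕ)),
          Γ j * Γ k) := by
  have hL := pairSum_univ_fin N (by omega) Γ
  rw [← sum_sum_filter_lt_and_eq_pairSum (fun j : Fin N => 2 ≤ (j : ℕ))
    fun j k hjk hj => hj.trans (Fin.le_iff_val_le_val.1 hjk.le)] at hL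
  set a := Γ ⟨0, by omega⟩
  set b := Γ ⟨1, by omega⟩
  set S := ∑ j ∈ univ.filter (fun j : Fin N => 2 ≤ (j : ℕ)), Γ j
  set r : ℝ := 1 + S * (1 / a + 1 / b) with hr_def
  have hS : S * (a + b) = (r - 1) * (a * b) := by
    have ha : a ≠ 0 := hΓ _
    have hb : b ≠ 0 := hΓ _
    rw [hr_def]; field_simp; ring
  obtain ⟨hsq, hr⟩ := Complex.sq_eq_ofReal_of_conj_div_self hΛ (r := r)
    (by rw [h, hr_def, Complex.ofReal_add, Complex.ofReal_one])
  refine ⟨Complex.eq_one_or_neg_one_or_I_or_neg_I_of_sq ?_, fun h1 => ?_, fun hI hL0 => ?_⟩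
  · rcases hr with hr | hr <;> simp [hsq, hr]
  · have hr1 : (r : ℂ) = 1 := by rw [← hsq]; rcases h1 with rfl | rfl <;> norm_num
    rw [show r = 1 by exact_mod_cast hr1, sub_self, zero_mul] at hS
    exact (mul_eq_zero.1 hS).resolve_right h12
  · have hr1 : (r : ℂ) = -1 := by rw [← hsq]; rcases hI with rfl | rfl <;> norm_num
    rw [show r = -1 by exact_mod_cast hr1] at hS
    change pairSum univ Γ = 0 at hL0
    linear_combination hL - hL0 + hS
end

section
/- Let Γ₁, Γ₂, Γ₃ be nonzero real numbers with Γ₁ + Γ₂ + Γ₃ = 0. Then it is impossible that both Γ₁/Γ₂ − Γ₂/Γ₁ = Γ₂/Γ₃ − Γ₃/Γ₂ and Γ₂/Γ₃ − Γ₃/Γ₂ = Γ₃/Γ₁ − Γ₁/Γ₃ hold. -/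
/-!
Clearing denominators, the first equality alone reads `(Γ₁ + Γ₃)(Γ₁Γ₃ - Γ₂²) = 0`. Since
`Γ₁ + Γ₃ = -Γ₂ ≠ 0`, this forces `Γ₁Γ₃ = Γ₂² = (Γ₁ + Γ₃)²`, i.e. `Γ₁² + Γ₁Γ₃ + Γ₃² = 0`, which is
impossible for a nonzero real `Γ₁` because this quadratic form is positive definite.
-/

theorem div_sub_div_eq_div_sub_div_iff {K : Type*} [Field K] {a b c : K}
    (ha : a ≠ 0) (hb : b ≠ 0) (hc : c ≠ 0) :
    a / b - b / a = b / c - c / b ↔ (a + c) * (a * c - b ^ 2) = 0 := by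
  rw [div_sub_div _ _ hb ha, div_sub_div _ _ hc hb, div_eq_div_iff (by positivity) (by positivity)]
  constructor <;> intro h
  · have : b * ((a + c) * (a * c - b ^ 2)) = 0 := by linear_combination h
    exact (mul_eq_zero.mp this).resolve_left hb
  · linear_combination b * h

theorem sq_add_mul_add_sq_pos {R : Type*} [CommRing R] [LinearOrder R] [IsStrictOrderedRing R]
    {a : R} (b : R) (ha : a ≠ 0) : 0 < a ^ 2 + a * b + b ^ 2 := by
  have h4 : 4 * (a ^ 2 + a * b + b ^ 2) = 3 * a ^ 2 + (a + 2 * b) ^ 2 := by ring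
  have : 0 < 4 * (a ^ 2 + a * b + b ^ 2) := by rw [h4]; positivity
  exact pos_of_mul_pos_right this zero_le_four

/-- The concluding contradiction in Propositions 4.7 and 4.8: the chain of equalities
Γ₁/Γ₂ − Γ₂/Γ₁ = Γ₂/Γ₃ − Γ₃/Γ₂ = Γ₃/Γ₁ − Γ₁/Γ₃ is impossible when Γ₁ + Γ₂ + Γ₃ = 0. -/
theorem triangle_ratio_contradiction
    (Γ₁ Γ₂ Γ₃ : ℝ) (h1 : Γ₁ ≠ 0) (h2 : Γ₂ ≠ 0) (h3 : Γ₃ ≠ 0)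
    (hsum : Γ₁ + Γ₂ + Γ₃ = 0) :
    ¬ (Γ₁ / Γ₂ - Γ₂ / Γ₁ = Γ₂ / Γ₃ - Γ₃ / Γ₂ ∧
       Γ₂ / Γ₃ - Γ₃ / Γ₂ = Γ₃ / Γ₁ - Γ₁ / Γ₃) := by
  rintro ⟨h12, -⟩
  have hΓ₂ : Γ₂ = -(Γ₁ + Γ₃) := by linear_combination hsum
  have hprod : (Γ₁ + Γ₃) * (Γ₁ * Γ₃ - Γ₂ ^ 2) = 0 :=
    (div_sub_div_eq_div_sub_div_iff h1 h2 h3).mp h12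
  have hsq : Γ₁ * Γ₃ = Γ₂ ^ 2 :=
    sub_eq_zero.mp ((mul_eq_zero.mp hprod).resolve_left fun h ↦ h2 (by linarith))
  have hform : Γ₁ ^ 2 + Γ₁ * Γ₃ + Γ₃ ^ 2 = 0 := by
    rw [hΓ₂] at hsq
    linear_combination -hsq
  exact (sq_add_mul_add_sq_pos Γ₃ h1).ne' hform
end

section
/- Let a, b, Γ₁, Γ₃, Γ₄ be complex numbers satisfying the four polynomial equations: (P1) a²(−Γ₃)(b+Γ₄) + ab(−Γ₄(b−2Γ₃) + Γ₁² + 2Γ₁(Γ₃+Γ₄)) − b²Γ₃Γ₄ = 0; (P2) a³Γ₃²(Γ₁+Γ₄) + a²Γ₃(−b(Γ₁²+Γ₁Γ₃+Γ₄(2Γ₃−Γ₄)) − (Γ₁−Γ₃+Γ₄)(Γ₁+Γ₃+Γ₄)²) − ab(Γ₁²Γ₄(b−4Γ₃) + Γ₁(Γ₄²(b+2Γ₄) + 2Γ₃³ − 2Γ₃²Γ₄ − 2Γ₃Γ₄²) − Γ₃²Γ₄(b+2Γ₄)) − ab(2bΓ₃Γ₄² − Γ₁⁴ − 2Γ₁³(Γ₃+Γ₄)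 + Γ₃⁴ + Γ₄⁴) + b²Γ₄(Γ₁(Γ₄(b+Γ₄) − 3Γ₃² − 2Γ₃Γ₄) + Γ₃Γ₄(b+Γ₄) − Γ₁³ − Γ₁²(3Γ₃+Γ₄) − Γ₃³ − Γ₃²Γ₄ + Γ₄³) = 0; (P3) a³(Γ₁+Γ₄) + a²(Γ₃(2Γ₁+Γ₃+2Γ₄) − b(Γ₁+2Γ₄)) + ab(bΓ₄ − 2Γ₁Γ₃ − Γ₃² − 2Γ₃Γ₄) − b²Γ₁Γ₄ = 0; (P4) a²Γ₃(b−Γ₁) − ab(b(Γ₁+2Γ₃) + Γ₄(2Γ₁+2Γ₃+Γ₄)) + b²(b(Γ₁+Γ₃) + Γ₄(2Γ₁+2Γ₃+Γ₄)) = 0. Then b⁵·(Γ₁+Γ₃+Γ₄)·(Γ₁² + Γ₁Γ₃ + Γ₁Γ₄ + Γ₃² + Γ₃Γ₄ + Γ₄²) = 0. -/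
/-- The Gröbner basis consequence in the proof of Proposition 4.10: any complex solution
(a, b, Γ₁, Γ₃, Γ₄) of the four quadrilateral polynomials satisfies
b⁵(Γ₁+Γ₃+Γ₄)(Γ₁²+Γ₁Γ₃+Γ₁Γ₄+Γ₃²+Γ₃Γ₄+Γ₄²) = 0. -/
theorem quadrilateral_groebner
    (a b Γ₁ Γ₃ Γ₄ : ℂ)
    (hP1 : a ^ 2 * (-Γ₃) * (b + Γ₄) +
      a * b * (-Γ₄ * (b - 2 * Γ₃) + Γ₁ ^ 2 + 2 * Γ₁ * (Γ₃ + Γ₄)) -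
      b ^ 2 * Γ₃ * Γ₄ = 0)
    (hP2 : a ^ 3 * Γ₃ ^ 2 * (Γ₁ + Γ₄) +
      a ^ 2 * Γ₃ *
        (-b * (Γ₁ ^ 2 + Γ₁ * Γ₃ + Γ₄ * (2 * Γ₃ - Γ₄)) -
          (Γ₁ - Γ₃ + Γ₄) * (Γ₁ + Γ₃ + Γ₄) ^ 2) -
      a * b *
        (Γ₁ ^ 2 * Γ₄ * (b - 4 * Γ₃) +
          Γ₁ * (Γ₄ ^ 2 * (b + 2 * Γ₄) + 2 * Γ₃ ^ 3 - 2 * Γ₃ ^ 2 * Γ₄ -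
            2 * Γ₃ * Γ₄ ^ 2) -
          Γ₃ ^ 2 * Γ₄ * (b + 2 * Γ₄)) -
      a * b *
        (2 * b * Γ₃ * Γ₄ ^ 2 - Γ₁ ^ 4 - 2 * Γ₁ ^ 3 * (Γ₃ + Γ₄) + Γ₃ ^ 4 + Γ₄ ^ 4) +
      b ^ 2 * Γ₄ *
        (Γ₁ * (Γ₄ * (b + Γ₄) - 3 * Γ₃ ^ 2 - 2 * Γ₃ * Γ₄) + Γ₃ * Γ₄ * (b + Γ₄) -
          Γ₁ ^ 3 - Γ₁ ^ 2 * (3 * Γ₃ + Γ₄) - Γ₃ ^ 3 - Γ₃ ^ 2 * Γ₄ + Γ₄ ^ 3) = 0)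
    (hP3 : a ^ 3 * (Γ₁ + Γ₄) +
      a ^ 2 * (Γ₃ * (2 * Γ₁ + Γ₃ + 2 * Γ₄) - b * (Γ₁ + 2 * Γ₄)) +
      a * b * (b * Γ₄ - 2 * Γ₁ * Γ₃ - Γ₃ ^ 2 - 2 * Γ₃ * Γ₄) -
      b ^ 2 * Γ₁ * Γ₄ = 0)
    (hP4 : a ^ 2 * Γ₃ * (b - Γ₁) -
      a * b * (b * (Γ₁ + 2 * Γ₃) + Γ₄ * (2 * Γ₁ + 2 * Γ₃ + Γ₄)) +
      b ^ 2 * (b * (Γ₁ + Γ₃) + Γ₄ * (2 * Γ₁ + 2 * Γ₃ + Γ₄)) = 0) :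
    b ^ 5 * (Γ₁ + Γ₃ + Γ₄) *
      (Γ₁ ^ 2 + Γ₁ * Γ₃ + Γ₁ * Γ₄ + Γ₃ ^ 2 + Γ₃ * Γ₄ + Γ₄ ^ 2) = 0 := by
  linear_combination ((-2 : ℂ)*a ^ 3*b + ((13 : ℂ)/8)*a ^ 3*Γ₁ + ((-3 : ℂ)/8)*a ^ 3*Γ₄ + (5 : ℂ)*a ^ 2*b ^ 2 + ((-29 : ℂ)/8)*a ^ 2*b*Γ₁ + ((-51 : ℂ)/8)*a ^ 2*b*Γ₃ + ((7 : ℂ)/4)*a ^ 2*b*Γ₄ + ((-103 : ℂ)/8)*a ^ 2*Γ₁ ^ 2 + ((81 : ℂ)/8)*a ^ 2*Γ₁*Γ₃ + ((-47 : ℂ)/4)*a ^ 2*Γ₁*Γ₄ + (-4 : ℂ)*a ^ 2*Γ₃ ^ 2 + ((15 : ℂ)/4)*a ^ 2*Γ₃*Γ₄ + ((9 : ℂ)/8)*a ^ 2*Γ₄ ^ 2 + (-4 : ℂ)*a*b ^ 3 + ((35 : ℂ)/8)*a*b ^ 2*Γ₁ + ((47 : ℂ)/4)*a*b ^ 2*Γ₃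 + ((-11 : ℂ)/8)*a*b ^ 2*Γ₄ + ((-9 : ℂ)/2)*a*b*Γ₁ ^ 2 + ((-31 : ℂ)/2)*a*b*Γ₁*Γ₃ + (12 : ℂ)*a*b*Γ₁*Γ₄ + ((37 : ℂ)/8)*a*b*Γ₃ ^ 2 + ((-7 : ℂ)/2)*a*b*Γ₃*Γ₄ + ((1 : ℂ)/8)*a*b*Γ₄ ^ 2 + ((-29 : ℂ)/4)*a*Γ₁ ^ 3 + ((-159 : ℂ)/4)*a*Γ₁ ^ 2*Γ₃ + ((-255 : ℂ)/8)*a*Γ₁ ^ 2*Γ₄ + ((-179 : ℂ)/8)*a*Γ₁*Γ₃ ^ 2 + ((-573 : ℂ)/8)*a*Γ₁*Γ₃*Γ₄ + (-42 : ℂ)*a*Γ₁*Γ₄ ^ 2 + ((-31 : ℂ)/8)*a*Γ₃ ^ 3 + ((-67 : ℂ)/8)*a*Γ₃ ^ 2*Γ₄ + ((-159 : ℂ)/8)*a*Γ₃*Γ₄ ^ 2 + ((-139 : ℂ)/8)*a*Γ₄ ^ 3 + (1 : ℂ)*b ^ 4 + ((-11 : ℂ)/8)*b ^ 3*Γ₁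 + ((-43 : ℂ)/8)*b ^ 3*Γ₃ + ((67 : ℂ)/8)*b ^ 2*Γ₁ ^ 2 + ((35 : ℂ)/4)*b ^ 2*Γ₁*Γ₃ + ((1 : ℂ)/8)*b ^ 2*Γ₁*Γ₄ + ((-13 : ℂ)/8)*b ^ 2*Γ₃ ^ 2 + ((-5 : ℂ)/4)*b ^ 2*Γ₃*Γ₄ + ((-9 : ℂ)/4)*b ^ 2*Γ₄ ^ 2 + ((37 : ℂ)/4)*b*Γ₁ ^ 3 + ((179 : ℂ)/8)*b*Γ₁ ^ 2*Γ₃ + ((143 : ℂ)/4)*b*Γ₁ ^ 2*Γ₄ + (17 : ℂ)*b*Γ₁*Γ₃ ^ 2 + ((465 : ℂ)/8)*b*Γ₁*Γ₃*Γ₄ + ((255 : ℂ)/8)*b*Γ₁*Γ₄ ^ 2 + ((31 : ℂ)/8)*b*Γ₃ ^ 3 + ((67 : ℂ)/8)*b*Γ₃ ^ 2*Γ₄ + ((159 : ℂ)/8)*b*Γ₃*Γ₄ ^ 2 + ((139 : ℂ)/8)*b*Γ₄ ^ 3) * hP1 + (((29 : ℂ)/8)*a ^ 2 + ((13 : ℂ)/2)*a*b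 + ((29 : ℂ)/4)*a*Γ₁ + (12 : ℂ)*a*Γ₃ + ((139 : ℂ)/8)*a*Γ₄ + ((-9 : ℂ)/8)*b ^ 2 + ((-37 : ℂ)/4)*b*Γ₁ + ((-31 : ℂ)/8)*b*Γ₃ + (-14 : ℂ)*b*Γ₄) * hP2 + (((-13 : ℂ)/8)*a ^ 2*b*Γ₃ + ((5 : ℂ)/4)*a ^ 2*Γ₁*Γ₃ + ((-29 : ℂ)/8)*a ^ 2*Γ₃ ^ 2 + ((-3 : ℂ)/8)*a ^ 2*Γ₃*Γ₄ + (-2 : ℂ)*a*b ^ 3 + ((13 : ℂ)/4)*a*b ^ 2*Γ₁ + ((5 : ℂ)/2)*a*b ^ 2*Γ₃ + ((-19 : ℂ)/8)*a*b ^ 2*Γ₄ + ((-13 : ℂ)/8)*a*b*Γ₁ ^ 2 + ((-5 : ℂ)/2)*a*b*Γ₁*Γ₃ + ((5 : ℂ)/4)*a*b*Γ₁*Γ₄ + ((-9 : ℂ)/4)*a*b*Γ₃ ^ 2 + ((19 : ℂ)/4)*a*b*Γ₃*Γ₄ + ((-3 : ℂ)/4)*a*b*Γ₄ ^ 2 +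 ((-43 : ℂ)/8)*a*Γ₁ ^ 2*Γ₃ + ((-27 : ℂ)/8)*a*Γ₁*Γ₃ ^ 2 + ((-101 : ℂ)/8)*a*Γ₁*Γ₃*Γ₄ + (-12 : ℂ)*a*Γ₃ ^ 3 + ((-37 : ℂ)/4)*a*Γ₃ ^ 2*Γ₄ + ((19 : ℂ)/4)*a*Γ₃*Γ₄ ^ 2 + (1 : ℂ)*b ^ 4 + ((-13 : ℂ)/4)*b ^ 3*Γ₁ + ((-25 : ℂ)/4)*b ^ 3*Γ₃ + (-7 : ℂ)*b ^ 2*Γ₁ ^ 2 + (-12 : ℂ)*b ^ 2*Γ₁*Γ₃ + ((-71 : ℂ)/4)*b ^ 2*Γ₁*Γ₄ + (-7 : ℂ)*b ^ 2*Γ₃ ^ 2 + ((-161 : ℂ)/8)*b ^ 2*Γ₃*Γ₄ + ((-1 : ℂ)/8)*b ^ 2*Γ₄ ^ 2 + ((37 : ℂ)/4)*b*Γ₁ ^ 3 + ((179 : ℂ)/8)*b*Γ₁ ^ 2*Γ₃ + (3 : ℂ)*b*Γ₁ ^ 2*Γ₄ + (17 : ℂ)*b*Γ₁*Γ₃ ^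 2 + ((53 : ℂ)/8)*b*Γ₁*Γ₃*Γ₄ + ((-173 : ℂ)/8)*b*Γ₁*Γ₄ ^ 2 + ((31 : ℂ)/8)*b*Γ₃ ^ 3 + ((-83 : ℂ)/8)*b*Γ₃ ^ 2*Γ₄ + ((-157 : ℂ)/8)*b*Γ₃*Γ₄ ^ 2 + ((-27 : ℂ)/8)*b*Γ₄ ^ 3) * hP3 + ((-2 : ℂ)*a ^ 3*b + ((5 : ℂ)/4)*a ^ 3*Γ₁ + ((-3 : ℂ)/4)*a ^ 3*Γ₄ + (1 : ℂ)*a ^ 2*b ^ 2 + ((-1 : ℂ)/4)*a ^ 2*b*Γ₁ + ((-51 : ℂ)/8)*a ^ 2*b*Γ₃ + ((-1 : ℂ)/2)*a ^ 2*b*Γ₄ + (-9 : ℂ)*a ^ 2*Γ₁ ^ 2 + ((11 : ℂ)/4)*a ^ 2*Γ₁*Γ₃ + (-16 : ℂ)*a ^ 2*Γ₁*Γ₄ + ((-19 : ℂ)/8)*a ^ 2*Γ₃ ^ 2 + ((-29 : ℂ)/8)*a ^ 2*Γ₃*Γ₄ + (-7 : ℂ)*a ^ 2*Γ₄ ^ 2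 + (-1 : ℂ)*a*b ^ 2*Γ₁ + (1 : ℂ)*a*b ^ 2*Γ₃ + ((-9 : ℂ)/8)*a*b ^ 2*Γ₄ + ((19 : ℂ)/8)*a*b*Γ₁ ^ 2 + ((9 : ℂ)/4)*a*b*Γ₁*Γ₃ + (21 : ℂ)*a*b*Γ₁*Γ₄ + ((-17 : ℂ)/4)*a*b*Γ₃ ^ 2 + ((31 : ℂ)/4)*a*b*Γ₃*Γ₄ + ((57 : ℂ)/4)*a*b*Γ₄ ^ 2 + ((-29 : ℂ)/4)*a*Γ₁ ^ 3 + (-30 : ℂ)*a*Γ₁ ^ 2*Γ₃ + ((-255 : ℂ)/8)*a*Γ₁ ^ 2*Γ₄ + ((-135 : ℂ)/8)*a*Γ₁*Γ₃ ^ 2 + ((-513 : ℂ)/8)*a*Γ₁*Γ₃*Γ₄ + (-42 : ℂ)*a*Γ₁*Γ₄ ^ 2 + ((-65 : ℂ)/8)*a*Γ₃ ^ 3 + ((-119 : ℂ)/8)*a*Γ₃ ^ 2*Γ₄ + ((-177 : ℂ)/8)*a*Γ₃*Γ₄ ^ 2 + ((-139 : ℂ)/8)*a*Γ₄ ^ 3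 + (1 : ℂ)*b ^ 3*Γ₄ + (1 : ℂ)*b ^ 2*Γ₁ ^ 2 + (1 : ℂ)*b ^ 2*Γ₁*Γ₃ + ((-5 : ℂ)/4)*b ^ 2*Γ₁*Γ₄ + (1 : ℂ)*b ^ 2*Γ₃ ^ 2 + ((-27 : ℂ)/8)*b ^ 2*Γ₃*Γ₄ + ((9 : ℂ)/8)*b ^ 2*Γ₄ ^ 2 + ((-81 : ℂ)/8)*b*Γ₁ ^ 2*Γ₄ + ((-7 : ℂ)/8)*b*Γ₁*Γ₃*Γ₄ + ((-65 : ℂ)/8)*b*Γ₁*Γ₄ ^ 2 + ((-19 : ℂ)/4)*b*Γ₃ ^ 2*Γ₄ + ((29 : ℂ)/4)*b*Γ₃*Γ₄ ^ 2 + (14 : ℂ)*b*Γ₄ ^ 3) * hP4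
end

section
/- Let Γ₁, Γ₂, Γ₃, Γ₄ be nonzero real numbers with Γ₁ + Γ₂ + Γ₃ + Γ₄ = 0, and let a, b ∈ ℂ with b ≠ 0. Then the four polynomial equations (P1) a²(−Γ₃)(b+Γ₄) + ab(−Γ₄(b−2Γ₃) + Γ₁² + 2Γ₁(Γ₃+Γ₄)) − b²Γ₃Γ₄ = 0; (P2) a³Γ₃²(Γ₁+Γ₄) + a²Γ₃(−b(Γ₁²+Γ₁Γ₃+Γ₄(2Γ₃−Γ₄)) − (Γ₁−Γ₃+Γ₄)(Γ₁+Γ₃+Γ₄)²) − ab(Γ₁²Γ₄(b−4Γ₃) + Γ₁(Γ₄²(b+2Γ₄) + 2Γ₃³ − 2Γ₃²Γ₄ − 2Γ₃Γ₄²) − Γ₃²Γ₄(b+2Γ₄)) − ab(2bΓ₃Γ₄² − Γ₁⁴ − 2Γ₁³(Γ₃+Γ₄) + Γ₃⁴ + Γ₄⁴) + b²Γ₄(Γ₁(Γ₄(b+Γ₄) − 3Γ₃² − 2Γ₃Γ₄) + Γ₃Γ₄(b+Γ₄) − Γ₁³ − Γ₁²(3Γ₃+Γ₄) − Γ₃³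 − Γ₃²Γ₄ + Γ₄³) = 0; (P3) a³(Γ₁+Γ₄) + a²(Γ₃(2Γ₁+Γ₃+2Γ₄) − b(Γ₁+2Γ₄)) + ab(bΓ₄ − 2Γ₁Γ₃ − Γ₃² − 2Γ₃Γ₄) − b²Γ₁Γ₄ = 0; (P4) a²Γ₃(b−Γ₁) − ab(b(Γ₁+2Γ₃) + Γ₄(2Γ₁+2Γ₃+Γ₄)) + b²(b(Γ₁+Γ₃) + Γ₄(2Γ₁+2Γ₃+Γ₄)) = 0 cannot all hold simultaneously. -/
/-- The algebraic contradiction concluding the proof of Proposition 4.10 on the isolated,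
fully z- and w-stroked, fully w-circled quadrilateral: with nonzero reals Γ₁,…,Γ₄ summing
to zero and b ≠ 0, the four polynomial equations cannot all hold. -/
theorem quadrilateral_contradiction
    (Γ₁ Γ₂ Γ₃ Γ₄ : ℝ) (h1 : Γ₁ ≠ 0) (h2 : Γ₂ ≠ 0) (h3 : Γ₃ ≠ 0) (h4 : Γ₄ ≠ 0)
    (hsum : Γ₁ + Γ₂ + Γ₃ + Γ₄ = 0)
    (a b : ℂ) (hb : b ≠ 0) :
    ¬ ((a ^ 2 * (-(Γ₃ : ℂ)) * (b + (Γ₄ : ℂ)) +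
          a * b * (-(Γ₄ : ℂ) * (b - 2 * (Γ₃ : ℂ)) + (Γ₁ : ℂ) ^ 2 +
            2 * (Γ₁ : ℂ) * ((Γ₃ : ℂ) + (Γ₄ : ℂ))) -
          b ^ 2 * (Γ₃ : ℂ) * (Γ₄ : ℂ) = 0) ∧
       (a ^ 3 * (Γ₃ : ℂ) ^ 2 * ((Γ₁ : ℂ) + (Γ₄ : ℂ)) +
          a ^ 2 * (Γ₃ : ℂ) *
            (-b * ((Γ₁ : ℂ) ^ 2 + (Γ₁ : ℂ) * (Γ₃ : ℂ) +
                (Γ₄ : ℂ) * (2 * (Γ₃ : ℂ) - (Γ₄ : ℂ))) -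
              ((Γ₁ : ℂ) - (Γ₃ : ℂ) + (Γ₄ : ℂ)) *
                ((Γ₁ : ℂ) + (Γ₃ : ℂ) + (Γ₄ : ℂ)) ^ 2) -
          a * b *
            ((Γ₁ : ℂ) ^ 2 * (Γ₄ : ℂ) * (b - 4 * (Γ₃ : ℂ)) +
              (Γ₁ : ℂ) * ((Γ₄ : ℂ) ^ 2 * (b + 2 * (Γ₄ : ℂ)) + 2 * (Γ₃ : ℂ) ^ 3 -
                2 * (Γ₃ : ℂ) ^ 2 * (Γ₄ : ℂ) - 2 * (Γ₃ : ℂ) * (Γ₄ : ℂ) ^ 2) -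
              (Γ₃ : ℂ) ^ 2 * (Γ₄ : ℂ) * (b + 2 * (Γ₄ : ℂ))) -
          a * b *
            (2 * b * (Γ₃ : ℂ) * (Γ₄ : ℂ) ^ 2 - (Γ₁ : ℂ) ^ 4 -
              2 * (Γ₁ : ℂ) ^ 3 * ((Γ₃ : ℂ) + (Γ₄ : ℂ)) + (Γ₃ : ℂ) ^ 4 +
              (Γ₄ : ℂ) ^ 4) +
          b ^ 2 * (Γ₄ : ℂ) *
            ((Γ₁ : ℂ) * ((Γ₄ : ℂ) * (b + (Γ₄ : ℂ)) - 3 * (Γ₃ : ℂ) ^ 2 -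
                2 * (Γ₃ : ℂ) * (Γ₄ : ℂ)) +
              (Γ₃ : ℂ) * (Γ₄ : ℂ) * (b + (Γ₄ : ℂ)) - (Γ₁ : ℂ) ^ 3 -
              (Γ₁ : ℂ) ^ 2 * (3 * (Γ₃ : ℂ) + (Γ₄ : ℂ)) - (Γ₃ : ℂ) ^ 3 -
              (Γ₃ : ℂ) ^ 2 * (Γ₄ : ℂ) + (Γ₄ : ℂ) ^ 3) = 0) ∧
       (a ^ 3 * ((Γ₁ : ℂ) + (Γ₄ : ℂ)) +
          a ^ 2 * ((Γ₃ : ℂ) * (2 * (Γ₁ : ℂ) + (Γ₃ : ℂ) + 2 * (Γ₄ : ℂ)) -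
            b * ((Γ₁ : ℂ) + 2 * (Γ₄ : ℂ))) +
          a * b * (b * (Γ₄ : ℂ) - 2 * (Γ₁ : ℂ) * (Γ₃ : ℂ) - (Γ₃ : ℂ) ^ 2 -
            2 * (Γ₃ : ℂ) * (Γ₄ : ℂ)) -
          b ^ 2 * (Γ₁ : ℂ) * (Γ₄ : ℂ) = 0) ∧
       (a ^ 2 * (Γ₃ : ℂ) * (b - (Γ₁ : ℂ)) -
          a * b * (b * ((Γ₁ : ℂ) + 2 * (Γ₃ : ℂ)) +
            (Γ₄ : ℂ) * (2 * (Γ₁ : ℂ) + 2 * (Γ₃ : ℂ) + (Γ₄ : ℂ))) +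
          b ^ 2 * (b * ((Γ₁ : ℂ) + (Γ₃ : ℂ)) +
            (Γ₄ : ℂ) * (2 * (Γ₁ : ℂ) + 2 * (Γ₃ : ℂ) + (Γ₄ : ℂ))) = 0)) := by

  rintro ⟨e1, e2, e3, e4⟩
  have h2' : Γ₁ + Γ₃ + Γ₄ ≠ 0 := by intro h; apply h2; linarith
  have hq : Γ₁^2 + Γ₁*Γ₃ + Γ₁*Γ₄ + Γ₃^2 + Γ₃*Γ₄ + Γ₄^2 ≠ 0 := by
    have : (0:ℝ) < Γ₁^2 + Γ₁*Γ₃ + Γ₁*Γ₄ + Γ₃^2 + Γ₃*Γ₄ + Γ₄^2 := by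
      nlinarith [sq_nonneg (Γ₁+Γ₃+Γ₄), sq_nonneg Γ₁, sq_nonneg Γ₃, sq_nonneg Γ₄,
        mul_self_pos.mpr h1]
    exact ne_of_gt this
  have key : b^5 * (((Γ₁ + Γ₃ + Γ₄ : ℝ)) : ℂ) *
      (((Γ₁^2 + Γ₁*Γ₃ + Γ₁*Γ₄ + Γ₃^2 + Γ₃*Γ₄ + Γ₄^2 : ℝ)) : ℂ) = 0 := by
    push_cast
    linear_combination ((1)*b^4 + (-4)*a*b^3 + (5)*a^2*b^2 + (-2)*a^3*b + (-3)*(Γ₄:ℂ)*a*b^2 + (5)*(Γ₄:ℂ)*a^2*b + (-2)*(Γ₄:ℂ)*a^3 + (-1)*(Γ₄:ℂ)^2*b^2 + (-3)*(Γ₃:ℂ)*b^3 + (7)*(Γ₃:ℂ)*a*b^2 + (-4)*(Γ₃:ℂ)*a^2*b + (-1)*(Γ₃:ℂ)*(Γ₄:ℂ)*b^2 + (4)*(Γ₃:ℂ)*(Γ₄:ℂ)*a*b + (-4)*(Γ₃:ℂ)*(Γ₄:ℂ)*a^2 + (2)*(Γ₃:ℂ)^2*b^2 + (-1)*(Γ₃:ℂ)^2*a*b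 + (-2)*(Γ₃:ℂ)^2*a^2 + (1)*(Γ₁:ℂ)*b^3 + (2)*(Γ₁:ℂ)*a*b^2 + (-2)*(Γ₁:ℂ)*a^2*b + (2)*(Γ₁:ℂ)*(Γ₄:ℂ)*b^2 + (4)*(Γ₁:ℂ)*(Γ₃:ℂ)*b^2 + (-3)*(Γ₁:ℂ)*(Γ₃:ℂ)*a*b) * e1 + ((1)*b^4 + (-2)*a*b^3 + (-4)*(Γ₄:ℂ)*a*b^2 + (-2)*(Γ₄:ℂ)^2*a*b + (-5)*(Γ₃:ℂ)*b^3 + (-2)*(Γ₃:ℂ)*a^2*b + (-3)*(Γ₃:ℂ)*(Γ₄:ℂ)*b^2 + (1)*(Γ₃:ℂ)*(Γ₄:ℂ)*a*b + (-2)*(Γ₃:ℂ)*(Γ₄:ℂ)*a^2 + (-2)*(Γ₁:ℂ)*b^3 + (2)*(Γ₁:ℂ)*a*b^2 + (1)*(Γ₁:ℂ)*(Γ₄:ℂ)*b^2 + (2)*(Γ₁:ℂ)*(Γ₄:ℂ)*a*b + (4)*(Γ₁:ℂ)*(Γ₃:ℂ)*b^2 + (1)*(Γ₁:ℂ)*(Γ₃:ℂ)*a*b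 + (2)*(Γ₁:ℂ)^2*b^2) * e3 + ((1)*a^2*b^2 + (-2)*a^3*b + (1)*(Γ₄:ℂ)*b^3 + (2)*(Γ₄:ℂ)*a^2*b + (-2)*(Γ₄:ℂ)*a^3 + (1)*(Γ₃:ℂ)*a*b^2 + (-4)*(Γ₃:ℂ)*a^2*b + (-1)*(Γ₃:ℂ)*(Γ₄:ℂ)*b^2 + (1)*(Γ₃:ℂ)*(Γ₄:ℂ)*a*b + (-4)*(Γ₃:ℂ)*(Γ₄:ℂ)*a^2 + (1)*(Γ₃:ℂ)^2*b^2 + (-3)*(Γ₃:ℂ)^2*a*b + (-1)*(Γ₁:ℂ)*a*b^2 + (1)*(Γ₁:ℂ)*a^2*b + (1)*(Γ₁:ℂ)*(Γ₃:ℂ)*b^2 + (1)*(Γ₁:ℂ)^2*b^2) * e4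
  exact (mul_ne_zero (mul_ne_zero (pow_ne_zero 5 hb)
    (Complex.ofReal_ne_zero.mpr h2')) (Complex.ofReal_ne_zero.mpr hq)) key
end
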